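/- Let P be a binary partial group and BP_n ⊆ P^n the set of words all of whose full parenthesizations yield defined and equal products. If w = (a_1, ..., a_n) ∈ BP_n, then for every 0 ≤ k ≤ n the word w^(k) = (a_k†, ..., a_1†, a_1, ..., a_n) lies in BP_{n+k}, and its common product equals the product a_{k+1}···a_n (interpreted as 1 when k = n). -/

import Mathlib

/-- A unital partial magma: a partially defined binary operation (encoded via
`Option`) with a two-sided unit. -/
structure UnitalPartialMagma (P : Type*) where
  mul : P → P → Option P
  one : P
  mul_one : ∀ a, mul a one = some a
  one_mul : ∀ a, mul one a = some a

/-- A binary partial group: a unital partial magma where each element has an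
inverse `inv a` with: `a*b` defined implies `(inv a)*(a*b)` defined and equal
to `b`, and `b*a` defined implies `(b*a)*(inv a)` defined and equal to `b`. -/
structure BinaryPartialGroup (P : Type*) extends UnitalPartialMagma P where
  inv : P → P
  inv_left : ∀ a b c, mul a b = some c → mul (inv a) c = some b
  inv_right : ∀ a b c, mul b a = some c → mul c (inv a) = some b

/-- Full parenthesizations of words, as binary trees. -/
inductive PTree : Type where
  | leaf : PTree
  | node : PTree → PTree → PTree

/-- The number of letters a parenthesization applies to. -/
def PTree.size : PTree → Nat
  | .leaf => 1
  | .node l r => l.size + r.size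

/-- The mirrored parenthesization. -/
def PTree.mirror : PTree → PTree
  | .leaf => .leaf
  | .node l r => .node r.mirror l.mirror

/-- The partial iterated multiplication of a word determined by a full
parenthesization. -/
def evalTree {P : Type*} (M : UnitalPartialMagma P) : PTree → List P → Option P
  | .leaf, [a] => some a
  | .leaf, _ => none
  | .node l r, w =>
      (evalTree M l (w.take l.size)).bind fun x =>
        (evalTree M r (w.drop l.size)).bind fun y => M.mul x y

/-- `IsProd M w a` says that every full parenthesization of the word `w` gives a
defined iterated product, and all these products equal `a`; the empty word has
product the unit.  Thus `w ∈ BP_n` iff `∃ a, IsProd M w a`. -/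
def IsProd {P : Type*} (M : UnitalPartialMagma P) (w : List P) (a : P) : Prop :=
  (w = [] → a = M.one) ∧ ∀ t : PTree, t.size = w.length → evalTree M t w = some a

/-!
For a balanced word `w = a₁ ⋯ aₙ` the products `c i j = a_{i+1} ⋯ a_j` of its subwords exist
and satisfy `c i j · c j l = c i l` for `i ≤ j ≤ l`. Setting `c j i := (c i j)†` extends this
identity to all triples of positions, since the inverse axioms let a factor move across an
equation. For any such cocycle `g`, a word whose letters are `g (p i) (p (i + 1))` along a path `p`
of positions is balanced with product `g (p 0) (p m)`, by induction on the parenthesization. The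
word `w^(k)` is of this form for the path `k, k - 1, …, 0, 1, …, n`, so its product is
`c k n = a_{k+1} ⋯ aₙ`.
-/

namespace BinaryPartialGroup

variable {P : Type*} (G : BinaryPartialGroup P)

theorem inv_mul_self (a : P) : G.mul (G.inv a) a = some G.one :=
  G.inv_left a G.one a (G.mul_one a)

theorem inv_inv (a : P) : G.inv (G.inv a) = a := by
  have h := G.inv_left (G.inv a) a G.one (G.inv_mul_self a)
  rw [G.mul_one] at h
  exact Option.some.inj h

theorem mul_inv_rev {x y z : P} (h : G.mul x y = some z) :
    G.mul (G.inv y) (G.inv x) = some (G.inv z) :=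
  G.inv_left y _ _ (G.inv_right z _ _ (G.inv_left x y z h))

theorem mul_left_cancel {x y y' z : P} (h : G.mul x y = some z) (h' : G.mul x y' = some z) :
    y = y' :=
  Option.some.inj ((G.inv_left x y z h).symm.trans (G.inv_left x y' z h'))

theorem mul_right_cancel {x x' y z : P} (h : G.mul x y = some z) (h' : G.mul x' y = some z) :
    x = x' :=
  Option.some.inj ((G.inv_right y x z h).symm.trans (G.inv_right y x' z h'))

theorem eq_one_of_mul_self {e : P} (h : G.mul e e = some e) : e = G.one :=
  Option.some.inj ((G.inv_left e e e h).symm.trans (G.inv_mul_self e))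

end BinaryPartialGroup

namespace PTree

theorem size_pos : ∀ t : PTree, 0 < t.size
  | leaf => Nat.one_pos
  | node l _ => Nat.add_pos_left l.size_pos _

theorem exists_size_eq_succ : ∀ n : ℕ, ∃ t : PTree, t.size = n + 1
  | 0 => ⟨leaf, rfl⟩
  | n + 1 =>
    have ⟨t, ht⟩ := exists_size_eq_succ n
    ⟨node leaf t, by rw [size, ht, size, Nat.add_comm]⟩

end PTree

section Products

variable {P : Type*}

theorem evalTree_node (M : UnitalPartialMagma P) (l r : PTree) (w : List P) :
    evalTree M (.node l r) w =
      (evalTree M l (w.take l.size)).bind fun x =>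
        (evalTree M r (w.drop l.size)).bind fun y => M.mul x y :=
  rfl

theorem evalTree_node_append (M : UnitalPartialMagma P) {l r : PTree} {u v : List P}
    (hl : l.size = u.length) :
    evalTree M (.node l r) (u ++ v) =
      (evalTree M l u).bind fun x => (evalTree M r v).bind fun y => M.mul x y := by
  rw [evalTree_node, hl, List.take_left, List.drop_left]

theorem isProd_nil (M : UnitalPartialMagma P) : IsProd M [] M.one :=
  ⟨fun _ => rfl, fun t ht => absurd ht t.size_pos.ne'⟩

theorem IsProd.unique {M : UnitalPartialMagma P} {w : List P} {a a' : P}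
    (h : IsProd M w a) (h' : IsProd M w a') : a = a' := by
  cases w with
  | nil => rw [h.1 rfl, h'.1 rfl]
  | cons x w =>
    obtain ⟨t, ht⟩ := PTree.exists_size_eq_succ w.length
    exact Option.some.inj ((h.2 t ht).symm.trans (h'.2 t ht))

theorem IsProd.eq_of_singleton {M : UnitalPartialMagma P} {x a : P} (h : IsProd M [x] a) :
    a = x :=
  (Option.some.inj (h.2 .leaf rfl)).symm

theorem IsProd.exists_evalTree_node {M : UnitalPartialMagma P} {u v : List P} {c : P}
    (h : IsProd M (u ++ v) c) {l r : PTree} (hl : l.size = u.length) (hr : r.size = v.length) :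
    ∃ a b, evalTree M l u = some a ∧ evalTree M r v = some b ∧ M.mul a b = some c := by
  have hc := h.2 (.node l r) (by rw [PTree.size, hl, hr, List.length_append])
  rw [evalTree_node_append M hl] at hc
  obtain ⟨a, ha, hc⟩ := Option.bind_eq_some_iff.mp hc
  obtain ⟨b, hb, hc⟩ := Option.bind_eq_some_iff.mp hc
  exact ⟨a, b, ha, hb, hc⟩

variable {G : BinaryPartialGroup P}

theorem IsProd.exists_split {u v : List P} {c : P}
    (h : IsProd G.toUnitalPartialMagma (u ++ v) c) :
    ∃ a b, IsProd G.toUnitalPartialMagma u a ∧ IsProd G.toUnitalPartialMagma v b ∧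
      G.mul a b = some c := by
  cases u with
  | nil => exact ⟨G.one, c, isProd_nil _, by simpa using h, G.one_mul c⟩
  | cons x u =>
    cases v with
    | nil => exact ⟨c, G.one, by simpa using h, isProd_nil _, G.mul_one c⟩
    | cons y v =>
      obtain ⟨l, hl⟩ := PTree.exists_size_eq_succ u.length
      obtain ⟨r, hr⟩ := PTree.exists_size_eq_succ v.length
      obtain ⟨a, b, ha, hb, hab⟩ := h.exists_evalTree_node hl hr
      refine ⟨a, b, ⟨nofun, fun t ht => ?_⟩, ⟨nofun, fun t ht => ?_⟩, hab⟩
      · obtain ⟨a', b', ha', hb', hab'⟩ := h.exists_evalTree_node ht hr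
        obtain rfl : b' = b := Option.some.inj (hb'.symm.trans hb)
        rw [ha', G.mul_right_cancel hab' hab]
      · obtain ⟨a', b', ha', hb', hab'⟩ := h.exists_evalTree_node hl ht
        obtain rfl : a' = a := Option.some.inj (ha'.symm.trans ha)
        rw [hb', G.mul_left_cancel hab' hab]

/-- `g x y` plays the role of the product of a word from position `x` to position `y`. -/
def IsCocycle (M : UnitalPartialMagma P) {ι : Type*} (g : ι → ι → P) : Prop :=
  ∀ x y z, M.mul (g x y) (g y z) = some (g x z)

theorem IsCocycle.evalTree_eq {M : UnitalPartialMagma P} {ι : Type*} {g : ι → ι → P}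
    (hg : IsCocycle M g) (t : PTree) (p : ℕ → ι) (v : List P) (hs : t.size = v.length)
    (hv : ∀ i (hi : i < v.length), v[i] = g (p i) (p (i + 1))) :
    evalTree M t v = some (g (p 0) (p t.size)) := by
  induction t generalizing p v with
  | leaf =>
    obtain ⟨x, rfl⟩ := List.length_eq_one_iff.mp hs.symm
    exact congrArg some (hv 0 Nat.one_pos)
  | node l r ihl ihr =>
    rw [PTree.size] at hs
    rw [evalTree_node,
      ihl p (v.take l.size) (by simp; omega) fun i hi => by
        rw [List.getElem_take]; exact hv i _,
      ihr (fun i => p (l.size + i)) (v.drop l.size) (by simp; omega) fun i hi => by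
        rw [List.getElem_drop, hv, Nat.add_assoc]]
    exact hg _ _ _

theorem isProd_of_isCocycle {ι : Type*} {g : ι → ι → P}
    (hg : IsCocycle G.toUnitalPartialMagma g) (p : ℕ → ι) (v : List P)
    (hv : ∀ i (hi : i < v.length), v[i] = g (p i) (p (i + 1))) :
    IsProd G.toUnitalPartialMagma v (g (p 0) (p v.length)) :=
  ⟨fun hnil => by subst hnil; exact G.eq_one_of_mul_self (hg _ _ _),
    fun t ht => by rw [hg.evalTree_eq t p v ht hv, ht]⟩

/-- `c i j` is the product of the letters of `w` in the (0-indexed) positions `i, …, j - 1`. -/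
def IsIntervalProd (M : UnitalPartialMagma P) (w : List P) (c : ℕ → ℕ → P) : Prop :=
  ∀ i j, IsProd M ((w.drop i).take (j - i)) (c i j)

theorem IsProd.exists_isIntervalProd {w : List P} {a : P}
    (h : IsProd G.toUnitalPartialMagma w a) :
    ∃ c, IsIntervalProd G.toUnitalPartialMagma w c := by
  have hinfix : ∀ i j, ∃ b, IsProd G.toUnitalPartialMagma ((w.drop i).take (j - i)) b := by
    intro i j
    rw [← List.take_append_drop i w, ← List.take_append_drop (j - i) (w.drop i)] at h
    obtain ⟨-, y, -, hy, -⟩ := h.exists_split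
    obtain ⟨b, -, hb, -, -⟩ := hy.exists_split
    exact ⟨b, hb⟩
  choose c hc using hinfix
  exact ⟨c, hc⟩

namespace IsIntervalProd

variable {w : List P} {c : ℕ → ℕ → P}

theorem mul (hc : IsIntervalProd G.toUnitalPartialMagma w c) {i j l : ℕ} (hij : i ≤ j)
    (hjl : j ≤ l) : G.mul (c i j) (c j l) = some (c i l) := by
  have hsplit : (w.drop i).take (l - i) = (w.drop i).take (j - i) ++ (w.drop j).take (l - j) := by
    rw [show l - i = (j - i) + (l - j) by omega, List.take_add, List.drop_drop,
      Nat.add_sub_cancel' hij]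
  obtain ⟨a, b, ha, hb, hab⟩ := (hsplit ▸ hc i l).exists_split
  rwa [ha.unique (hc i j), hb.unique (hc j l)] at hab

theorem eq_getElem (hc : IsIntervalProd G.toUnitalPartialMagma w c) {i : ℕ} (hi : i < w.length) :
    c i (i + 1) = w[i] := by
  have hci := hc i (i + 1)
  rw [Nat.add_sub_cancel_left, List.drop_eq_getElem_cons hi, List.take_succ_cons,
    List.take_zero] at hci
  exact hci.eq_of_singleton

end IsIntervalProd

variable (G) in
def signedProd (c : ℕ → ℕ → P) (x y : ℕ) : P :=
  if x ≤ y then c x y else G.inv (c y x)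

theorem isCocycle_signedProd {c : ℕ → ℕ → P}
    (hc : ∀ i j l, i ≤ j → j ≤ l → G.mul (c i j) (c j l) = some (c i l)) :
    IsCocycle G.toUnitalPartialMagma (signedProd G c) := by
  -- each order of `x, y, z` reduces to the monotone one by moving factors across with
  -- `inv_left` / `inv_right`
  intro x y z
  by_cases hxy : x ≤ y <;> by_cases hyz : y ≤ z <;> by_cases hxz : x ≤ z <;>
    simp only [signedProd, hxy, hyz, hxz, if_true, if_false]
  · exact hc x y z hxy hyz
  · omega
  · exact G.inv_right _ _ _ (hc x z y hxz (by omega))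
  · exact G.inv_right _ _ _ (G.inv_left _ _ _ (hc z x y (by omega) hxy))
  · exact G.inv_left _ _ _ (hc y x z (by omega) hxz)
  · simpa only [G.inv_inv] using G.inv_right _ _ _ (G.mul_inv_rev (hc y z x hyz (by omega)))
  · omega
  · exact G.mul_inv_rev (hc z y x (by omega) (by omega))

theorem IsIntervalProd.getElem_inv_reverse_take_append {w : List P} {c : ℕ → ℕ → P}
    (hc : IsIntervalProd G.toUnitalPartialMagma w c) {k : ℕ} (hk : k ≤ w.length) (i : ℕ)
    (hi : i < (((w.take k).map G.inv).reverse ++ w).length) :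
    (((w.take k).map G.inv).reverse ++ w)[i] =
      signedProd G c (k - i + (i - k)) (k - (i + 1) + (i + 1 - k)) := by
  have hlen : (((w.take k).map G.inv).reverse).length = k := by simp; omega
  have hi' : i < k + w.length := by simp at hi; omega
  rcases lt_or_ge i k with hik | hki
  · rw [List.getElem_append_left (by omega), List.getElem_reverse, List.getElem_map,
      List.getElem_take, show k - i + (i - k) = k - (i + 1) + 1 by omega,
      show k - (i + 1) + (i + 1 - k) = k - (i + 1) by omega, signedProd, if_neg (by omega),
      hc.eq_getElem (by omega)]
    simp only [List.length_map, List.length_take]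
    congr 2
    omega
  · rw [List.getElem_append_right (by omega), show k - i + (i - k) = i - k by omega,
      show k - (i + 1) + (i + 1 - k) = i - k + 1 by omega, signedProd, if_pos (by omega),
      hc.eq_getElem (by omega)]
    simp only [hlen]

end Products

/-- If `w = (a_1, …, a_n) ∈ BP_n` and `0 ≤ k ≤ n`, then the word
`w^(k) = (a_k†, …, a_1†, a_1, …, a_n)` lies in `BP_{n+k}` and its common
product equals the common product of `(a_{k+1}, …, a_n)` (which is `1` when
`k = n`). -/
theorem stmt_13 {P : Type*} (G : BinaryPartialGroup P) (w : List P) (a : P)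
    (h : IsProd G.toUnitalPartialMagma w a) (k : ℕ) (hk : k ≤ w.length) :
    ∃ b, IsProd G.toUnitalPartialMagma (w.drop k) b ∧
      IsProd G.toUnitalPartialMagma (((w.take k).map G.inv).reverse ++ w) b := by
  obtain ⟨c, hc⟩ := h.exists_isIntervalProd
  refine ⟨c k w.length, by simpa [List.take_of_length_le] using hc k w.length, ?_⟩
  have hg := isCocycle_signedProd fun _ _ _ => hc.mul
  -- `k - i + (i - k) = |i - k|` runs through the positions `k, k - 1, …, 0, 1, …, n`
  have hv := isProd_of_isCocycle hg (fun i => k - i + (i - k)) _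
    (hc.getElem_inv_reverse_take_append hk)
  simpa [signedProd, hk] using hv
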